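/- arXiv:1811.02100 — 3 statements merged into one kernel-verified Lean document; each statement's English description precedes it below -/
import Mathlib

section
/- Let n ≥ 1 be a natural number (regarded as a real number in the formulas), let β ∈ (0,1), β' ∈ ℝ, let K₁, K₃, K₄, C₂ ≥ 0 and w ≥ 0 be real numbers, let A, R be real n×n matrices with ∑_{i,j} (R i j)² ≤ n²·C₂, and let r₁, r₂, s be real numbers with r₁ ≥ −K₁·w, r₂ ≥ −K₁·w, and s ≥ −(K₃ + K₄). Then (β'/(1−β))·(∑_i A i i) + 2(1−β)·r₁ + 2β·(r₂ + s + ∑_{i,j} (A i j)²) + 2·∑_{i,j} (R i j)(A i j) ≥ (β/n)·(∑_i A i i)² + (β'/(1−β))·(∑_i A i i) − 2K₁·w − n²·C₂/β − 2β·(K₃ + K₄). -/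
/-- Algebraic core of the lower estimate for
`I = (β'/(1−β))Δf + 2(1−β)Ric(∇f,∇f) + 2β(Ric + Ṡ + ‖∇²f‖²) + 2 Ricⁱʲ fᵢⱼ`. -/
theorem I_lower_bound (n : ℕ) (hn : 1 ≤ n) (β β' K₁ K₃ K₄ C₂ w : ℝ)
    (hβ : β ∈ Set.Ioo (0 : ℝ) 1) (hK₁ : 0 ≤ K₁) (hK₃ : 0 ≤ K₃) (hK₄ : 0 ≤ K₄)
    (hC₂ : 0 ≤ C₂) (hw : 0 ≤ w)
    (A R : Matrix (Fin n) (Fin n) ℝ)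
    (hR : ∑ i, ∑ j, (R i j) ^ 2 ≤ (n : ℝ) ^ 2 * C₂)
    (r₁ r₂ s : ℝ) (hr₁ : r₁ ≥ -K₁ * w) (hr₂ : r₂ ≥ -K₁ * w)
    (hs : s ≥ -(K₃ + K₄)) :
    (β' / (1 - β)) * (∑ i, A i i) + 2 * (1 - β) * r₁ +
        2 * β * (r₂ + s + ∑ i, ∑ j, (A i j) ^ 2) + 2 * ∑ i, ∑ j, R i j * A i j ≥
      (β / (n : ℝ)) * (∑ i, A i i) ^ 2 + (β' / (1 - β)) * (∑ i, A i i) -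
        2 * K₁ * w - (n : ℝ) ^ 2 * C₂ / β - 2 * β * (K₃ + K₄) := by
  obtain ⟨hβ0, hβ1⟩ := hβ
  have hn0 : (0 : ℝ) < n := by exact_mod_cast hn
  -- Cauchy–Schwarz: (tr A)² ≤ n * ∑ Aᵢᵢ² ≤ n * ‖A‖²
  have hcs : (∑ i, A i i) ^ 2 ≤ (n : ℝ) * ∑ i, ∑ j, (A i j) ^ 2 := by
    calc (∑ i, A i i) ^ 2 ≤ (Finset.univ.card : ℝ) * ∑ i, (A i i) ^ 2 := by
          have := sq_sum_le_card_mul_sum_sq (s := (Finset.univ : Finset (Fin n))) (f := fun i => A i i)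
          exact_mod_cast this
      _ ≤ (n : ℝ) * ∑ i, ∑ j, (A i j) ^ 2 := by
          rw [Finset.card_univ, Fintype.card_fin]
          refine mul_le_mul_of_nonneg_left (Finset.sum_le_sum fun i _ => ?_) hn0.le
          exact Finset.single_le_sum (f := fun j => (A i j) ^ 2) (fun j _ => sq_nonneg _) (Finset.mem_univ i)
  have htr : (β / (n : ℝ)) * (∑ i, A i i) ^ 2 ≤ β * ∑ i, ∑ j, (A i j) ^ 2 := by
    rw [div_mul_eq_mul_div, div_le_iff₀ hn0]
    nlinarith [hβ0.le]
  -- 2⟨R,A⟩ ≥ −β‖A‖² − ‖R‖²/β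
  have hmix : 0 ≤ ∑ i, ∑ j, (β * (A i j) ^ 2 + (R i j) ^ 2 / β + 2 * (R i j * A i j)) := by
    refine Finset.sum_nonneg fun i _ => Finset.sum_nonneg fun j _ => ?_
    have : β * (A i j) ^ 2 + (R i j) ^ 2 / β + 2 * (R i j * A i j)
        = (β * A i j + R i j) ^ 2 / β := by
      field_simp; ring
    rw [this]; positivity
  have hsplit : ∑ i, ∑ j, (β * (A i j) ^ 2 + (R i j) ^ 2 / β + 2 * (R i j * A i j))
      = β * (∑ i, ∑ j, (A i j) ^ 2) + (∑ i, ∑ j, (R i j) ^ 2) / β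
        + 2 * ∑ i, ∑ j, R i j * A i j := by
    simp [Finset.sum_add_distrib, Finset.mul_sum, Finset.sum_div]
  rw [hsplit] at hmix
  have hRb : (∑ i, ∑ j, (R i j) ^ 2) / β ≤ (n : ℝ) ^ 2 * C₂ / β := by gcongr
  nlinarith [mul_le_mul_of_nonneg_left hr₁ (by linarith : (0:ℝ) ≤ 2 * (1 - β)),
    mul_le_mul_of_nonneg_left hr₂ (by linarith : (0:ℝ) ≤ 2 * β),
    mul_le_mul_of_nonneg_left hs (by linarith : (0:ℝ) ≤ 2 * β)]
end

section
/- Let K < 0 and T > 0 be real numbers, and let b : ℝ → ℝ be continuous on [0,T] with b(0) = 0, b(t) > 0 for every t ∈ (0,T], and b monotone nondecreasing on (0,T]. For t ∈ (0,T] define β(t) = 1 + (2K·e^{2Kt}/b(t)) · ∫₀ᵗ b(s)·e^{−2Ks} ds. Then for every t ∈ (0,T] one has e^{2Kt} ≤ β(t) < 1; in particular 0 < β(t) < 1. -/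
/-! Since `b` is nondecreasing,
`∫₀ᵗ b(s) e^{-2Ks} ds ≤ b(t) ∫₀ᵗ e^{-2Ks} ds = b(t) (e^{-2Kt} - 1)/(-2K)`,
and the coefficient `2K e^{2Kt}/b(t)` is negative, so `β(t) ≥ 1 - (1 - e^{2Kt}) = e^{2Kt} > 0`.
The integral is strictly positive, hence `β(t) < 1`. -/

open Set MeasureTheory

theorem integral_exp_mul {c : ℝ} (hc : c ≠ 0) (a b : ℝ) :
    ∫ x in a..b, Real.exp (c * x) = (Real.exp (c * b) - Real.exp (c * a)) / c := by
  rw [intervalIntegral.integral_comp_mul_left Real.exp hc, integral_exp, smul_eq_mul,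
    inv_mul_eq_div]

theorem integral_mul_le_mul_integral_of_monotoneOn {f g : ℝ → ℝ} {a b : ℝ} (hab : a < b)
    (hf : MonotoneOn f (Ioc a b)) (hfg : IntervalIntegrable (fun x ↦ f x * g x) volume a b)
    (hg : IntervalIntegrable g volume a b) (hg0 : ∀ x ∈ Ioo a b, 0 ≤ g x) :
    ∫ x in a..b, f x * g x ≤ f b * ∫ x in a..b, g x := by
  rw [← intervalIntegral.integral_const_mul]
  refine intervalIntegral.integral_mono_on_of_le_Ioo hab.le hfg (hg.const_mul _) fun x hx ↦ ?_
  exact mul_le_mul_of_nonneg_right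
    (hf ⟨hx.1, hx.2.le⟩ (right_mem_Ioc.2 hab) hx.2.le) (hg0 x hx)

theorem integral_mul_exp_le_of_monotoneOn {b : ℝ → ℝ} {c t : ℝ} (hc : c ≠ 0) (ht : 0 < t)
    (hbmono : MonotoneOn b (Ioc 0 t))
    (hint : IntervalIntegrable (fun s ↦ b s * Real.exp (c * s)) volume 0 t) :
    ∫ s in (0 : ℝ)..t, b s * Real.exp (c * s) ≤ b t * ((Real.exp (c * t) - 1) / c) := by
  have hexp : Continuous fun s ↦ Real.exp (c * s) := by fun_prop
  have := integral_mul_le_mul_integral_of_monotoneOn ht hbmono hint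
    (hexp.intervalIntegrable _ _) fun s _ ↦ (Real.exp_pos _).le
  rwa [integral_exp_mul hc, mul_zero, Real.exp_zero] at this

theorem one_add_exp_mul_div_mul_mem_Ico {K t B I : ℝ} (hK : K < 0) (hB : 0 < B) (hI : 0 < I)
    (hIle : I ≤ B * ((Real.exp (-2 * K * t) - 1) / (-2 * K))) :
    1 + 2 * K * Real.exp (2 * K * t) / B * I ∈ Ico (Real.exp (2 * K * t)) 1 := by
  have hcoef : 2 * K * Real.exp (2 * K * t) / B < 0 :=
    div_neg_of_neg_of_pos (mul_neg_of_neg_of_pos (by linarith) (Real.exp_pos _)) hB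
  have hbound : 2 * K * Real.exp (2 * K * t) / B * (B * ((Real.exp (-2 * K * t) - 1) / (-2 * K)))
      = Real.exp (2 * K * t) - 1 := by
    have hexp : Real.exp (2 * K * t) * Real.exp (-2 * K * t) = 1 := by
      rw [← Real.exp_add]; ring_nf; exact Real.exp_zero
    generalize Real.exp (-2 * K * t) = E' at hexp ⊢
    field_simp [hK.ne, hB.ne']
    linear_combination -hexp
  exact ⟨by linarith [mul_le_mul_of_nonpos_left hIle hcoef.le],
    by linarith [mul_neg_of_neg_of_pos hcoef hI]⟩

theorem beta_mem_Ioo_general (K T : ℝ) (hK : K < 0) (b : ℝ → ℝ)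
    (hb : ContinuousOn b (Set.Icc 0 T))
    (hbpos : ∀ t ∈ Set.Ioc (0 : ℝ) T, 0 < b t)
    (hbmono : MonotoneOn b (Set.Ioc (0 : ℝ) T))
    (β : ℝ → ℝ)
    (hβ : ∀ t ∈ Set.Ioc (0 : ℝ) T,
      β t = 1 + (2 * K * Real.exp (2 * K * t) / b t) *
        ∫ s in (0 : ℝ)..t, b s * Real.exp (-2 * K * s)) :
    ∀ t ∈ Set.Ioc (0 : ℝ) T,
      Real.exp (2 * K * t) ≤ β t ∧ β t < 1 ∧ 0 < β t := by
  rintro t ⟨ht0, htT⟩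
  have hint : IntervalIntegrable (fun s ↦ b s * Real.exp (-2 * K * s)) volume 0 t := by
    refine ContinuousOn.intervalIntegrable ?_
    rw [uIcc_of_le ht0.le]
    exact (hb.mono (Icc_subset_Icc_right htT)).mul (by fun_prop)
  have hI_pos : 0 < ∫ s in (0 : ℝ)..t, b s * Real.exp (-2 * K * s) :=
    intervalIntegral.intervalIntegral_pos_of_pos_on hint
      (fun s hs ↦ mul_pos (hbpos s ⟨hs.1, hs.2.le.trans htT⟩) (Real.exp_pos _)) ht0
  have hI_le := integral_mul_exp_le_of_monotoneOn (by linarith) ht0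
    (hbmono.mono (Ioc_subset_Ioc_right htT)) hint
  obtain ⟨hlower, hupper⟩ :=
    one_add_exp_mul_div_mul_mem_Ico hK (hbpos t ⟨ht0, htT⟩) hI_pos hI_le
  rw [hβ t ⟨ht0, htT⟩]
  exact ⟨hlower, hupper, (Real.exp_pos _).trans_le hlower⟩

/-- The function `β(t) = 1 + (2K e^{2Kt}/b(t)) ∫₀ᵗ b(s)e^{−2Ks} ds` satisfies
`e^{2Kt} ≤ β(t) < 1`, in particular `0 < β(t) < 1`, on `(0,T]`. -/
theorem beta_mem_Ioo (K T : ℝ) (hK : K < 0) (hT : 0 < T) (b : ℝ → ℝ)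
    (hb : ContinuousOn b (Set.Icc 0 T)) (hb0 : b 0 = 0)
    (hbpos : ∀ t ∈ Set.Ioc (0 : ℝ) T, 0 < b t)
    (hbmono : MonotoneOn b (Set.Ioc (0 : ℝ) T))
    (β : ℝ → ℝ)
    (hβ : ∀ t ∈ Set.Ioc (0 : ℝ) T,
      β t = 1 + (2 * K * Real.exp (2 * K * t) / b t) *
        ∫ s in (0 : ℝ)..t, b s * Real.exp (-2 * K * s)) :
    ∀ t ∈ Set.Ioc (0 : ℝ) T,
      Real.exp (2 * K * t) ≤ β t ∧ β t < 1 ∧ 0 < β t :=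
  beta_mem_Ioo_general K T hK b hb hbpos hbmono β hβ
end

section
/- Let N > 0, β ∈ (0,1), and let Kₘ, β', Ψ, p, w, z be real numbers. Set γ = (β' − 2·Kₘ·β)/(1 − β). If p + γ·Ψ − N·γ²/(8β) ≥ 0, then 2β·( Kₘ·w + (z − w)²/N ) − β'·w + p ≥ γ·(β·w − z − Ψ). -/
/-!
Writing `γ = (β' − 2Kₘβ)/(1 − β)`, i.e. `β' = γ(1 − β) + 2Kₘβ`, the difference of the two sides
is `(2β/N)(z − w)² + γ(z − w) + p + γΨ`. Completing the square bounds the quadratic part below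
by `−Nγ²/(8β)`, and (B₅) says exactly that `p + γΨ` compensates this.
-/

theorem neg_sq_div_le_mul_sq_add_mul {a : ℝ} (ha : 0 < a) (b x : ℝ) :
    -(b ^ 2 / (4 * a)) ≤ a * x ^ 2 + b * x := by
  have hsq : a * x ^ 2 + b * x + b ^ 2 / (4 * a) = a * (x + b / (2 * a)) ^ 2 := by
    field_simp
    ring
  have : 0 ≤ a * (x + b / (2 * a)) ^ 2 := by positivity
  linarith

/-- Pointwise algebraic core of the lemma `Δ^V G + 2dG(∇f) − ∂ₜG ≥ γ G`,
with `γ = (β' − 2K⁻β)/(1 − β)` and condition (B₅). -/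
theorem G_subsolution_core (N β Kₘ β' Ψ p w z : ℝ) (hN : 0 < N)
    (hβ : β ∈ Set.Ioo (0 : ℝ) 1)
    (hB5 : p + ((β' - 2 * Kₘ * β) / (1 - β)) * Ψ -
      N * ((β' - 2 * Kₘ * β) / (1 - β)) ^ 2 / (8 * β) ≥ 0) :
    2 * β * (Kₘ * w + (z - w) ^ 2 / N) - β' * w + p ≥
      ((β' - 2 * Kₘ * β) / (1 - β)) * (β * w - z - Ψ) := by
  obtain ⟨hβ0, hβ1⟩ := hβ
  set γ := (β' - 2 * Kₘ * β) / (1 - β) with hγ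
  have hβ' : β' = γ * (1 - β) + 2 * Kₘ * β := by
    rw [hγ, div_mul_cancel₀ _ (sub_pos.mpr hβ1).ne']
    ring
  have hsplit : 2 * β * (Kₘ * w + (z - w) ^ 2 / N) - β' * w + p - γ * (β * w - z - Ψ)
      = (2 * β / N * (z - w) ^ 2 + γ * (z - w)) + (p + γ * Ψ) := by
    rw [hβ']
    ring
  have hquad := neg_sq_div_le_mul_sq_add_mul (by positivity : 0 < 2 * β / N) γ (z - w)
  have hconst : γ ^ 2 / (4 * (2 * β / N)) = N * γ ^ 2 / (8 * β) := by
    field_simp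
    ring
  linarith
end
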